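/- For all real numbers δ, C ≥ 0 with C > 0 and δ/C ≤ 1, we have (δ + C)·ln(δ/C + 1) ≥ δ + δ²/(3C). -/

import Mathlib

/-!
Substituting `x = δ / C` and dividing by `C`, the claim is `x + x² / 3 ≤ (1 + x) log (1 + x)` for
`0 ≤ x ≤ 1`. Both sides vanish at `0`, and the derivative of the difference is
`log (1 + x) - 2x / 3`, which is nonnegative on `[0, 1]`: by concavity `log (1 + x)` lies above
its chord `x log 2`, and `log 2 > 2 / 3`.
-/

open Real Set

lemma mul_log_two_le_log_one_add {x : ℝ} (h0 : 0 ≤ x) (h1 : x ≤ 1) :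
    x * log 2 ≤ log (1 + x) := by
  have h := strictConcaveOn_log_Ioi.concaveOn.2 (mem_Ioi.mpr one_pos) (mem_Ioi.mpr two_pos)
    (sub_nonneg.mpr h1) h0 (sub_add_cancel 1 x)
  simp only [smul_eq_mul, log_one, mul_zero, zero_add] at h
  rwa [show (1 - x) * 1 + x * 2 = 1 + x by ring] at h

lemma two_mul_div_three_le_log_one_add {x : ℝ} (h0 : 0 ≤ x) (h1 : x ≤ 1) :
    2 * x / 3 ≤ log (1 + x) := by
  have hlog2 : 2 / 3 ≤ log 2 := le_trans (by norm_num) log_two_gt_d9.le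
  calc 2 * x / 3 = x * (2 / 3) := by ring
    _ ≤ x * log 2 := mul_le_mul_of_nonneg_left hlog2 h0
    _ ≤ log (1 + x) := mul_log_two_le_log_one_add h0 h1

lemma hasDerivAt_one_add_mul_log_one_add {x : ℝ} (hx : 1 + x ≠ 0) :
    HasDerivAt (fun t => (1 + t) * log (1 + t)) (log (1 + x) + 1) x := by
  have hshift := (hasDerivAt_id x).const_add 1
  refine (hshift.mul (hshift.log hx)).congr_deriv ?_
  simp only [id]
  field_simp

lemma add_sq_div_three_le_one_add_mul_log_one_add {x : ℝ} (h0 : 0 ≤ x) (h1 : x ≤ 1) :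
    x + x ^ 2 / 3 ≤ (1 + x) * log (1 + x) := by
  set F : ℝ → ℝ := fun t => (1 + t) * log (1 + t) - (t + t ^ 2 / 3)
  have hcont : ContinuousOn F (Icc 0 1) := by
    have hlog : ContinuousOn (fun t : ℝ => log (1 + t)) (Icc 0 1) :=
      ContinuousOn.log (by fun_prop) fun t ht => by linarith [ht.1]
    fun_prop
  have hmono : MonotoneOn F (Icc 0 1) := by
    refine monotoneOn_of_hasDerivWithinAt_nonneg (f' := fun t => log (1 + t) - 2 * t / 3)
      (convex_Icc 0 1) hcont (fun t ht => ?_) (fun t ht => ?_) <;> rw [interior_Icc] at ht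
    · refine HasDerivAt.hasDerivWithinAt <|
        ((hasDerivAt_one_add_mul_log_one_add (by linarith [ht.1])).sub
          ((hasDerivAt_id t).add ((hasDerivAt_pow 2 t).div_const 3))).congr_deriv ?_
      norm_num
      ring
    · exact sub_nonneg.mpr (two_mul_div_three_le_log_one_add ht.1.le ht.2.le)
  simpa [F] using hmono (left_mem_Icc.mpr zero_le_one) ⟨h0, h1⟩ h0

theorem stmt_0 (δ C : ℝ) (hδ : 0 ≤ δ) (hC : 0 < C) (h : δ / C ≤ 1) :
    (δ + C) * Real.log (δ / C + 1) ≥ δ + δ ^ 2 / (3 * C) := by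
  have hkey := add_sq_div_three_le_one_add_mul_log_one_add (div_nonneg hδ hC.le) h
  calc δ + δ ^ 2 / (3 * C) = C * (δ / C + (δ / C) ^ 2 / 3) := by field_simp
    _ ≤ C * ((1 + δ / C) * log (1 + δ / C)) := mul_le_mul_of_nonneg_left hkey hC.le
    _ = (δ + C) * log (δ / C + 1) := by rw [add_comm 1]; field_simp
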